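/- arXiv:math/0409460 — 4 statements merged into one kernel-verified Lean document; each statement's English description precedes it below -/
import Mathlib

section
/- Let M be an abelian group and φ : M → M a ℤ-linear automorphism. Then the operation a ▷ b = φ(a) + b - φ(b) makes M a quandle, and this quandle is connected (has a single orbit under the right translations) if and only if the map (id - φ) : M → M is surjective. -/
/-- The Alexander quandle operation for an automorphism φ of an abelian group. -/
def autOp {M : Type*} [AddCommGroup M] (φ : AddAut M) (a b : M) : M :=
  φ a + b - φ b

/-- A quandle (here: `M` with operation `autOp φ`) is connected if the group generated by
the right translations `x ↦ x ▷ b` acts transitively. -/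
def autConnected {M : Type*} [AddCommGroup M] (φ : AddAut M) : Prop :=
  ∀ x y : M, ∃ σ ∈ Subgroup.closure
    {σ : Equiv.Perm M | ∃ b : M, ∀ z : M, σ z = autOp φ z b}, σ x = y

theorem alexander_aut_quandle_connected_iff (M : Type*) [AddCommGroup M] (φ : AddAut M) :
    (∀ a : M, autOp φ a a = a) ∧
    (∀ a b : M, ∃! c : M, autOp φ c b = a) ∧
    (∀ a b c : M, autOp φ (autOp φ a b) c = autOp φ (autOp φ a c) (autOp φ b c)) ∧
    (autConnected φ ↔ Function.Surjective fun m : M => m - φ m) := by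
  refine ⟨fun a => by simp [autOp], ?_, ?_, ?_⟩
  · intro a b
    refine ⟨φ.symm (a - b + φ b), ?_, ?_⟩
    · simp only [autOp, AddEquiv.apply_symm_apply]
      abel
    · intro y hy
      apply φ.injective
      rw [AddEquiv.apply_symm_apply, ← hy]
      simp only [autOp]
      abel
  · intro a b c
    simp only [autOp, map_add, map_sub]
    abel
  · set f : M →+ M := AddMonoidHom.id M - φ.toAddMonoidHom with hf
    have hfm : ∀ m : M, f m = m - φ m := fun m => rfl
    have key : ∀ σ ∈ Subgroup.closure {σ : Equiv.Perm M | ∃ b, ∀ z, σ z = autOp φ z b},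
        ∀ x : M, σ x - x ∈ f.range := by
      intro σ hσ
      induction hσ using Subgroup.closure_induction with
      | mem τ hτ =>
        intro x
        obtain ⟨b, hb⟩ := hτ
        refine ⟨b - x, ?_⟩
        rw [hfm, hb, autOp, map_sub]
        abel
      | one => intro x; simpa using zero_mem f.range
      | mul σ τ _ _ hσ' hτ' =>
        intro x
        have h : (σ * τ) x - x = (σ (τ x) - τ x) + (τ x - x) := by
          rw [Equiv.Perm.mul_apply]; abel
        rw [h]; exact add_mem (hσ' _) (hτ' _)
      | inv σ _ hσ' =>
        intro x
        have h : σ⁻¹ x - x = -(σ (σ⁻¹ x) - σ⁻¹ x) := by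
          simp
        rw [h]; exact neg_mem (hσ' _)
    constructor
    · intro h y
      obtain ⟨σ, hσ, hx⟩ := h 0 y
      have := key σ hσ 0
      rw [hx, sub_zero] at this
      obtain ⟨m, hm⟩ := this
      exact ⟨m, hm⟩
    · intro h x y
      obtain ⟨b, hb⟩ := h (y - φ x)
      simp only at hb
      refine ⟨φ.toEquiv.trans (Equiv.addRight (b - φ b)), ?_, ?_⟩
      · apply Subgroup.subset_closure
        exact ⟨b, fun z => by simp [autOp, add_sub_assoc]⟩
      · show φ x + (b - φ b) = y
        rw [hb]; abel
end

section
/- There is no automorphism φ of ℤ/8 × ℤ/2 such that id - φ is surjective; consequently, no Alexander quandle with underlying abelian group ℤ/8 × ℤ/2 is connected. -/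
theorem no_connected_alexander_Z8_Z2 :
    ∀ φ : AddAut (ZMod 8 × ZMod 2),
      ¬ Function.Surjective (fun m : ZMod 8 × ZMod 2 => m - φ m) := by
  intro φ hs
  have hinj : Function.Injective (fun m : ZMod 8 × ZMod 2 => m - φ m) :=
    Finite.injective_iff_surjective.mpr hs
  set v : ZMod 8 × ZMod 2 := (4, 0) with hv
  -- φ fixes v
  have hv2 : v = 2 • ((2, 1) : ZMod 8 × ZMod 2) := by decide
  have hd : (φ v).2 = 0 := by
    have h : φ v = 2 • φ (2, 1) := by rw [hv2, map_nsmul]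
    have h2 : ∀ a : ZMod 2, 2 • a = 0 := by decide
    rw [h, Prod.smul_snd, h2]
  have hφ2 : 2 • φ v = 0 := by
    rw [← map_nsmul, show (2 : ℕ) • v = 0 by decide, map_zero]
  have hc : (φ v).1 = 0 ∨ (φ v).1 = 4 := by
    have h := congrArg Prod.fst hφ2
    rw [Prod.smul_fst, Prod.fst_zero] at h
    have key : ∀ c : ZMod 8, 2 • c = 0 → c = 0 ∨ c = 4 := by decide
    exact key _ h
  rcases hc with hc | hc
  · have h0 : φ v = 0 := Prod.ext hc hd
    have : v = 0 := by
      have := φ.injective (a₁ := v) (a₂ := 0) (by rw [h0, map_zero])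
      exact this
    exact absurd this (by decide)
  · have hfix : φ v = v := Prod.ext hc hd
    have : v = 0 := hinj (a₁ := v) (a₂ := 0) (by simp [hfix])
    exact absurd this (by decide)
end

section
/- There is no automorphism φ of ℤ/4 × ℤ/2 × ℤ/2 such that id - φ is surjective; consequently, no Alexander quandle with underlying abelian group ℤ/4 × ℤ/2 × ℤ/2 is connected. -/
theorem no_connected_alexander_Z4_Z2_Z2 :
    ∀ φ : AddAut (ZMod 4 × ZMod 2 × ZMod 2),
      ¬ Function.Surjective (fun m : ZMod 4 × ZMod 2 × ZMod 2 => m - φ m) := by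
  intro φ hs
  set a : ZMod 4 × ZMod 2 × ZMod 2 := (2, 0, 0) with ha
  have h2 : ∀ x : ZMod 4 × ZMod 2 × ZMod 2, 2 • x = 0 ∨ 2 • x = a := by decide
  have ha0 : a ≠ 0 := by decide
  have haeq : a = 2 • ((1, 0, 0) : ZMod 4 × ZMod 2 × ZMod 2) := by decide
  have key : φ a = 2 • φ (1, 0, 0) := by rw [haeq, map_nsmul]
  have hfa : φ a = a := by
    rcases h2 (φ (1, 0, 0)) with h | h
    · exact absurd (φ.injective ((key.trans h).trans (map_zero φ).symm)) ha0
    · rw [key, h]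
  have hinj : Function.Injective (fun m : ZMod 4 × ZMod 2 × ZMod 2 => m - φ m) :=
    (Finite.injective_iff_surjective).mpr hs
  exact ha0 (hinj (by simp [hfa, map_zero]))
end

section
/- Let a and b be units mod n. If the Alexander quandles Λₙ/(t-a) and Λₙ/(t-b) are isomorphic (as quandles with operation x ▷ y = ax + (1-a)y, resp. with b), then gcd(n, 1-a) = gcd(n, 1-b). -/
theorem linear_quandle_iso_gcd (n : ℕ) [NeZero n] (a b : (ZMod n)ˣ)
    (f : ZMod n ≃ ZMod n)
    (hf : ∀ x y : ZMod n,
      f ((a : ZMod n) * x + (1 - (a : ZMod n)) * y)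
        = (b : ZMod n) * f x + (1 - (b : ZMod n)) * f y) :
    Nat.gcd n (1 - (a : ZMod n)).val = Nat.gcd n (1 - (b : ZMod n)).val := by
  set c : ZMod n := 1 - (a : ZMod n) with hc
  set d : ZMod n := 1 - (b : ZMod n) with hd
  -- key identity: f (c * y) - f 0 = d * (f y - f 0)
  have key : ∀ y : ZMod n, f (c * y) - f 0 = d * (f y - f 0) := by
    intro y
    have h := hf 0 y
    rw [mul_zero, zero_add] at h
    have h0 := hf 0 0
    rw [mul_zero, zero_add, mul_zero] at h0
    rw [h]
    ring
  -- bijection between ranges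
  have hbij : Set.BijOn (fun x => f x - f 0)
      (Set.range (fun y => c * y)) (Set.range (fun y => d * y)) := by
    refine ⟨?_, ?_, ?_⟩
    · rintro x ⟨y, rfl⟩
      exact ⟨f y - f 0, (key y).symm⟩
    · intro x _ y _ h
      have : f x = f y := by
        have := sub_left_injective h
        exact this
      exact f.injective this
    · rintro z ⟨w, rfl⟩
      refine ⟨c * f.symm (w + f 0), ⟨f.symm (w + f 0), rfl⟩, ?_⟩
      simp only [key, Equiv.apply_symm_apply]
      ring
  have hcard : Nat.card (Set.range (fun y => c * y)) =
      Nat.card (Set.range (fun y => d * y)) :=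
    Nat.card_eq_of_bijective _ (Set.BijOn.bijective hbij)
  -- each range is the zmultiples subgroup
  have hrange : ∀ e : ZMod n,
      Set.range (fun y => e * y) = (AddSubgroup.zmultiples e : Set (ZMod n)) := by
    intro e
    ext x
    constructor
    · rintro ⟨y, rfl⟩
      refine ⟨(y.val : ℤ), ?_⟩
      show ((y.val : ℤ)) • e = e * y
      rw [zsmul_eq_mul]
      push_cast
      rw [ZMod.natCast_val, ZMod.cast_id, mul_comm]
    · rintro ⟨k, rfl⟩
      refine ⟨(k : ZMod n), ?_⟩
      show e * ((k : ZMod n)) = k • e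
      rw [zsmul_eq_mul, mul_comm]
  have hord : ∀ e : ZMod n, Nat.card (Set.range (fun y => e * y)) = n / n.gcd e.val := by
    intro e
    rw [hrange e]
    have he : ((e.val : ℕ) : ZMod n) = e := by rw [ZMod.natCast_val, ZMod.cast_id]
    have : Nat.card (AddSubgroup.zmultiples e) = addOrderOf e := Nat.card_zmultiples e
    rw [show Nat.card ((AddSubgroup.zmultiples e : Set (ZMod n))) =
        Nat.card (AddSubgroup.zmultiples e) from rfl, this]
    conv_lhs => rw [← he]
    rw [ZMod.addOrderOf_coe _ (NeZero.ne n)]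
  rw [hord, hord] at hcard
  have h1 : n.gcd c.val ∣ n := Nat.gcd_dvd_left _ _
  have h2 : n.gcd d.val ∣ n := Nat.gcd_dvd_left _ _
  calc n.gcd c.val = n / (n / n.gcd c.val) := (Nat.div_div_self h1 (NeZero.ne n)).symm
    _ = n / (n / n.gcd d.val) := by rw [hcard]
    _ = n.gcd d.val := Nat.div_div_self h2 (NeZero.ne n)
end
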